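/- arXiv:2409.01061 — 6 statements merged into one kernel-verified Lean document; each statement's English description precedes it below -/
import Mathlib

section
/- Let U ⊆ ℝⁿ be open, γ > 1/2, and f : U → ℝ a γ-Hölder continuous function. If x ∈ U, ν ∈ 𝕊ⁿ ⊆ ℝⁿ × ℝ, and s > 0 are such that the open ball B((x, f(x)) + s·ν, s) in ℝⁿ⁺¹ is disjoint from the graph {(y, f(y)) : y ∈ U}, then ν does not lie in ℝⁿ × {0}. -/
/-!
If `ν = (v, 0)` is horizontal, the graph point above `x + t • v` lies outside the ball of radius
`s` centred at `(x + s • v, f x)`, which forces `|f (x + t • v) - f x|² ≥ 2st - t²`, a growth of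
order `t^(1/2)`. Hölder continuity bounds the same quantity by `L² t^(2γ)`, and `2γ > 1` makes this
impossible for small `t > 0`.
-/

open Filter Topology

theorem WithLp.prod_norm_fst_eq_of_snd_eq_zero {α β : Type*} [SeminormedAddCommGroup α]
    [SeminormedAddCommGroup β] (x : WithLp 2 (α × β)) (h : x.snd = 0) : ‖x.fst‖ = ‖x‖ := by
  have := WithLp.prod_norm_sq_eq_of_L2 x
  rw [h, norm_zero, zero_pow two_ne_zero, add_zero] at this
  exact ((pow_left_inj₀ (norm_nonneg _) (norm_nonneg _) two_ne_zero).mp this).symm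

theorem WithLp.dist_toLp_add_smul_sq {E : Type*} [SeminormedAddCommGroup E] [NormedSpace ℝ E]
    {v : E} (hv : ‖v‖ = 1) (a : E) (t s b c : ℝ) :
    dist (WithLp.toLp 2 (a + t • v, b)) (WithLp.toLp 2 (a + s • v, c)) ^ 2
      = (t - s) ^ 2 + (b - c) ^ 2 := by
  rw [WithLp.prod_dist_eq_of_L2, Real.sq_sqrt (by positivity)]
  simp only [WithLp.toLp_fst, WithLp.toLp_snd, dist_eq_norm, Real.norm_eq_abs, sq_abs,
    add_sub_add_left_eq_sub, ← sub_smul, norm_smul, hv, mul_one]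

theorem two_mul_sub_sq_le_sq_of_le_dist {E : Type*} [SeminormedAddCommGroup E] [NormedSpace ℝ E]
    {v : E} (hv : ‖v‖ = 1) {a : E} {t s b c : ℝ} (hs : 0 ≤ s)
    (h : s ≤ dist (WithLp.toLp 2 (a + t • v, b)) (WithLp.toLp 2 (a + s • v, c))) :
    2 * s * t - t ^ 2 ≤ (b - c) ^ 2 := by
  have := pow_le_pow_left₀ hs h 2
  rw [WithLp.dist_toLp_add_smul_sq hv] at this
  linarith

theorem eventually_mul_rpow_lt_mul {p : ℝ} (hp : 1 < p) (C : ℝ) {s : ℝ} (hs : 0 < s) :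
    ∀ᶠ t in 𝓝[>] 0, C * t ^ p < s * t := by
  have hlim : Tendsto (fun t : ℝ => C * t ^ (p - 1)) (𝓝 0) (𝓝 0) := by
    simpa [Real.zero_rpow (by linarith : p - 1 ≠ 0)] using
      ((Real.continuousAt_rpow_const 0 (p - 1) (Or.inr (by linarith))).tendsto.const_mul C)
  filter_upwards [nhdsWithin_le_nhds (hlim.eventually (gt_mem_nhds hs)), self_mem_nhdsWithin]
    with t ht (htpos : 0 < t)
  calc C * t ^ p = C * t ^ (p - 1) * t := by
        rw [mul_assoc, ← Real.rpow_add_one htpos.ne', sub_add_cancel]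
    _ < s * t := by gcongr

theorem sq_sub_le_of_abs_sub_le_mul_rpow {a b L t γ : ℝ} (ht : 0 ≤ t)
    (h : |a - b| ≤ L * t ^ γ) : (a - b) ^ 2 ≤ L ^ 2 * t ^ (2 * γ) := by
  calc (a - b) ^ 2 ≤ (L * t ^ γ) ^ 2 := sq_le_sq' (abs_le.mp h).1 (abs_le.mp h).2
    _ = L ^ 2 * t ^ (2 * γ) := by rw [mul_pow, mul_comm 2 γ, Real.rpow_mul ht, Real.rpow_two]

theorem stmt_0_general (n : ℕ) (U : Set (EuclideanSpace ℝ (Fin n))) (hU : IsOpen U)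
    (γ : ℝ) (hγ : 1 / 2 < γ) (f : EuclideanSpace ℝ (Fin n) → ℝ)
    (L : ℝ)
    (hHolder : ∀ x ∈ U, ∀ y ∈ U, |f x - f y| ≤ L * dist x y ^ γ)
    (x : EuclideanSpace ℝ (Fin n)) (hx : x ∈ U)
    (ν : WithLp 2 (EuclideanSpace ℝ (Fin n) × ℝ)) (hν : ‖ν‖ = 1)
    (s : ℝ) (hs : 0 < s)
    (hball : ∀ y ∈ U,
      s ≤ dist ((WithLp.equiv 2 (EuclideanSpace ℝ (Fin n) × ℝ)).symm (y, f y))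
        ((WithLp.equiv 2 (EuclideanSpace ℝ (Fin n) × ℝ)).symm (x, f x) + s • ν)) :
    ((WithLp.equiv 2 (EuclideanSpace ℝ (Fin n) × ℝ)) ν).2 ≠ 0 := by
  intro hν₂
  set v := ν.fst
  have hv : ‖v‖ = 1 := (ν.prod_norm_fst_eq_of_snd_eq_zero hν₂).trans hν
  have hcenter : WithLp.toLp 2 (x, f x) + s • ν = WithLp.toLp 2 (x + s • v, f x) := by
    apply WithLp.ofLp_injective
    ext <;> simp [v, show ν.snd = 0 from hν₂]
  have hU_near : ∀ᶠ t in 𝓝[>] (0 : ℝ), x + t • v ∈ U :=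
    nhdsWithin_le_nhds <| (Continuous.tendsto (by fun_prop) 0).eventually
      (by simpa using hU.mem_nhds hx)
  have hIoo : ∀ᶠ t in 𝓝[>] (0 : ℝ), t ∈ Set.Ioo 0 s := Ioo_mem_nhdsGT hs
  obtain ⟨t, ⟨ht, hts⟩, hyU, hsmall⟩ := (hIoo.and <| hU_near.and <|
    eventually_mul_rpow_lt_mul (by linarith : 1 < 2 * γ) (L ^ 2) hs).exists
  have hlower : 2 * s * t - t ^ 2 ≤ (f (x + t • v) - f x) ^ 2 :=
    two_mul_sub_sq_le_sq_of_le_dist hv hs.le (by simpa [hcenter] using hball _ hyU)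
  have hupper : (f (x + t • v) - f x) ^ 2 ≤ L ^ 2 * t ^ (2 * γ) := by
    have h := hHolder _ hyU x hx
    rw [dist_eq_norm, add_sub_cancel_left, norm_smul, hv, mul_one, Real.norm_of_nonneg ht.le] at h
    exact sq_sub_le_of_abs_sub_le_mul_rpow ht.le h
  nlinarith

/-- if the graph of a `γ`-Hölder function with `γ > 1/2` avoids an
open ball in `ℝⁿ × ℝ` touching the graph at `(x, f x)`, then the direction `ν`
from the touching point to the center is not horizontal. -/
theorem stmt_0 (n : ℕ) (U : Set (EuclideanSpace ℝ (Fin n))) (hU : IsOpen U)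
    (γ : ℝ) (hγ : 1 / 2 < γ) (f : EuclideanSpace ℝ (Fin n) → ℝ)
    (L : ℝ) (hL : 0 ≤ L)
    (hHolder : ∀ x ∈ U, ∀ y ∈ U, |f x - f y| ≤ L * dist x y ^ γ)
    (x : EuclideanSpace ℝ (Fin n)) (hx : x ∈ U)
    (ν : WithLp 2 (EuclideanSpace ℝ (Fin n) × ℝ)) (hν : ‖ν‖ = 1)
    (s : ℝ) (hs : 0 < s)
    (hball : ∀ y ∈ U,
      s ≤ dist ((WithLp.equiv 2 (EuclideanSpace ℝ (Fin n) × ℝ)).symm (y, f y))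
        ((WithLp.equiv 2 (EuclideanSpace ℝ (Fin n) × ℝ)).symm (x, f x) + s • ν)) :
    ((WithLp.equiv 2 (EuclideanSpace ℝ (Fin n) × ℝ)) ν).2 ≠ 0 :=
  stmt_0_general n U hU γ hγ f L hHolder x hx ν hν s hs hball
end

section
/- Let μ be a measure on a set X, C > 0 a constant, and {E_j : j ∈ S} a countable family of μ-measurable sets such that for every i ∈ S, the number of j ∈ S with E_j ∩ E_i ≠ ∅ is at most C. Then Σ_{i ∈ S} μ(E_i) ≤ C · μ(⋃_{i ∈ S} E_i). -/
open MeasureTheory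
open scoped ENNReal

/-!
Integrate the counting function `∑ i, 𝟙_{E i}`: its integral is `∑ i, μ (E i)`, and bounded
overlap means that at a point `x ∈ E i₀` only the sets meeting `E i₀` are counted, so the
function is at most `C` on `⋃ i, E i` and vanishes off it.
-/

theorem Set.encard_setOf_mem_le_of_encard_overlap_le {X κ : Type*} {E : κ → Set X} {C : ℕ∞}
    (hover : ∀ i, {j | (E j ∩ E i).Nonempty}.encard ≤ C) (x : X) :
    {i | x ∈ E i}.encard ≤ C := by
  rcases Set.eq_empty_or_nonempty {i | x ∈ E i} with hempty | ⟨i, hxi⟩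
  · simp [hempty]
  · exact (Set.encard_le_encard fun j hxj => show (E j ∩ E i).Nonempty from ⟨x, hxj, hxi⟩).trans
      (hover i)

namespace MeasureTheory

variable {X κ : Type*} [MeasurableSpace X] {μ : Measure X} {E : κ → Set X}

theorem sum_measure_le_mul_measure_biUnion_of_encard_mem_le {s : Finset κ}
    (hE : ∀ i ∈ s, MeasurableSet (E i)) {C : ℕ} (hmult : ∀ x, {i | x ∈ E i}.encard ≤ C) :
    ∑ i ∈ s, μ (E i) ≤ C * μ (⋃ i ∈ s, E i) := by
  classical
  have hpointwise : ∀ x, ∑ i ∈ s, (E i).indicator 1 x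
      ≤ (⋃ i ∈ s, E i).indicator (fun _ => (C : ℝ≥0∞)) x := by
    intro x
    rw [Finset.sum_indicator_eq_sum_filter]
    by_cases hx : x ∈ ⋃ i ∈ s, E i
    · have hcard : ({i ∈ s | x ∈ E i}.card : ℕ∞) ≤ C := by
        rw [← Set.encard_coe_eq_coe_finsetCard, Finset.coe_filter]
        exact (Set.encard_le_encard fun i hi => hi.2).trans (hmult x)
      simpa [Set.indicator_of_mem hx] using hcard
    · have : {i ∈ s | x ∈ E i} = ∅ :=
        Finset.filter_eq_empty_iff.2 fun i hi hxi => hx (Set.mem_biUnion hi hxi)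
      simp [this]
  calc ∑ i ∈ s, μ (E i) = ∑ i ∈ s, ∫⁻ x, (E i).indicator 1 x ∂μ :=
        Finset.sum_congr rfl fun i hi => (lintegral_indicator_one (hE i hi)).symm
    _ = ∫⁻ x, ∑ i ∈ s, (E i).indicator 1 x ∂μ :=
        (lintegral_finsetSum' s fun i hi =>
          (measurable_one.indicator (hE i hi)).aemeasurable).symm
    _ ≤ ∫⁻ x, (⋃ i ∈ s, E i).indicator (fun _ => (C : ℝ≥0∞)) x ∂μ := lintegral_mono hpointwise
    _ = C * μ (⋃ i ∈ s, E i) := by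
        rw [lintegral_indicator_const (s.measurableSet_biUnion hE)]

theorem tsum_measure_le_mul_measure_iUnion_of_encard_mem_le
    (hE : ∀ i, MeasurableSet (E i)) {C : ℕ} (hmult : ∀ x, {i | x ∈ E i}.encard ≤ C) :
    ∑' i, μ (E i) ≤ C * μ (⋃ i, E i) := by
  rw [ENNReal.tsum_eq_iSup_sum]
  refine iSup_le fun s => ?_
  calc ∑ i ∈ s, μ (E i) ≤ C * μ (⋃ i ∈ s, E i) :=
        sum_measure_le_mul_measure_biUnion_of_encard_mem_le (fun i _ => hE i) hmult
    _ ≤ C * μ (⋃ i, E i) := by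
        gcongr C * μ ?_
        exact Set.iUnion₂_subset_iUnion _ _

end MeasureTheory

theorem stmt_1_general {X ι : Type*} [MeasurableSpace X] (μ : Measure X)
    (C : ℕ) (S : Set ι)
    (E : ι → Set X) (hE : ∀ i ∈ S, MeasurableSet (E i))
    (hover : ∀ i ∈ S, Set.encard {j | j ∈ S ∧ (E j ∩ E i).Nonempty} ≤ (C : ℕ∞)) :
    ∑' i : S, μ (E i) ≤ (C : ℝ≥0∞) * μ (⋃ i ∈ S, E i) := by
  have hover_S : ∀ i : S, {j : S | (E j ∩ E i).Nonempty}.encard ≤ C := fun i =>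
    ((Set.encard_le_encard fun j hj => show j.1 ∈ S ∧ _ from ⟨j.2, hj⟩).trans
      (Set.encard_preimage_val_le_encard_right _ _)).trans (hover i i.2)
  rw [Set.biUnion_eq_iUnion]
  exact tsum_measure_le_mul_measure_iUnion_of_encard_mem_le (E := fun i : S => E i)
    (fun i => hE i i.2) (Set.encard_setOf_mem_le_of_encard_overlap_le hover_S)

/-- bounded-overlap countable families of measurable sets. -/
theorem stmt_1 {X ι : Type*} [MeasurableSpace X] (μ : Measure X)
    (C : ℕ) (hC : 0 < C) (S : Set ι) (hS : S.Countable)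
    (E : ι → Set X) (hE : ∀ i ∈ S, MeasurableSet (E i))
    (hover : ∀ i ∈ S, Set.encard {j | j ∈ S ∧ (E j ∩ E i).Nonempty} ≤ (C : ℕ∞)) :
    ∑' i : S, μ (E i) ≤ (C : ℝ≥0∞) * μ (⋃ i ∈ S, E i) :=
  stmt_1_general μ C S E hE hover
end

section
/- Let α ∈ 𝒟¹(ℝ^{n+1} × ℝ^{n+1}) be the contact 1-form defined by ⟨(y,v), α(x,u)⟩ = y • u. For k ∈ {0,…,n}, let φ_k be the k-th Lipschitz-Killing n-form defined by ⟨ξ₁ ∧ … ∧ ξₙ, φ_k(x,u)⟩ = Σ_{σ ∈ Σ_{n,k}} ⟨π_{σ(1)}(ξ₁) ∧ … ∧ π_{σ(n)}(ξₙ) ∧ u, E'⟩, where Σ_{n,k} = {σ : {1,…,n} → {0,1} : Σᵢ σ(i) = n − k}, π₀(x,u) = x, π₁(x,u) = u. Then for every (x,u) ∈ ℝ^{n+1} × 𝕊ⁿ and every ξ₁,…,ξ_{n+1} tangent to ℝ^{n+1} × 𝕊ⁿ at (x,u): ⟨ξ₁∧…∧ξ_{n+1}, dφ_k(x,u)⟩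 = (n−k+1)⟨ξ₁∧…∧ξ_{n+1}, α(x,u) ∧ φ_{k−1}(x,u)⟩ for k = 1,…,n, and ⟨ξ₁∧…∧ξ_{n+1}, dφ₀(x,u)⟩ = 0. -/
open scoped RealInnerProductSpace BigOperators

noncomputable section

/-- The determinant pairing `⟨v₁ ∧ … ∧ v_{n+1}, E'⟩` with the standard dual
volume covector of `ℝ^{n+1}`. -/
def detPairLK (n : ℕ) (v : Fin (n + 1) → EuclideanSpace ℝ (Fin (n + 1))) : ℝ :=
  ((EuclideanSpace.basisFun (Fin (n + 1)) ℝ).toBasis.det) v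

/-- The `k`-th Lipschitz–Killing `n`-form of `ℝ^{n+1}`, evaluated at the point
`p = (x,u)` on the `n` tangent vectors `ξ`:
`⟨ξ₁ ∧ … ∧ ξₙ, φ_k(x,u)⟩ = Σ_{σ ∈ Σ_{n,k}} ⟨π_{σ(1)}ξ₁ ∧ … ∧ π_{σ(n)}ξₙ ∧ u, E'⟩`. -/
def LKform (n k : ℕ)
    (p : EuclideanSpace ℝ (Fin (n + 1)) × EuclideanSpace ℝ (Fin (n + 1)))
    (ξ : Fin n → EuclideanSpace ℝ (Fin (n + 1)) × EuclideanSpace ℝ (Fin (n + 1))) : ℝ :=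
  ∑ σ ∈ Finset.univ.filter (fun σ : Fin n → Fin 2 => ∑ i, (σ i : ℕ) = n - k),
    detPairLK n (Fin.snoc (fun i => if σ i = 0 then (ξ i).1 else (ξ i).2) p.2)

/-- The exterior derivative of the `k`-th Lipschitz–Killing form, evaluated at
`p` on `n+1` vectors via the alternating-sum formula. -/
def LKd (n k : ℕ)
    (p : EuclideanSpace ℝ (Fin (n + 1)) × EuclideanSpace ℝ (Fin (n + 1)))
    (ξ : Fin (n + 1) → EuclideanSpace ℝ (Fin (n + 1)) × EuclideanSpace ℝ (Fin (n + 1))) : ℝ :=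
  ∑ j : Fin (n + 1), (-1 : ℝ) ^ (j : ℕ) *
    fderiv ℝ (fun q => LKform n k q (fun i => ξ (j.succAbove i))) p (ξ j)

/-!
Write `ξ_j = (y_j, v_j)`. Because `φ_k(x,u)` is linear in `u` and independent of `x`,
`dφ_k(ξ) = Σ_j (-1)^j φ_k(ξ_j)(ξ̂_j)`, where `ξ̂_j` omits `ξ_j`.
Moving the inserted `v_j` to slot `j` turns this into `(-1)^n (n-k+1) Σ_τ det(π_τ ξ)`, summed over
`τ : {0,…,n} → {0,1}` with `n-k+1` ones, since each such `τ` arises once for every `j` with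
`τ j = 1`. The right-hand side regroups the same way into
`(-1)^n Σ_τ Σ_{τ j = 0} ⟨y_j,u⟩ det(π_τ ξ with u in slot j)`.
For a unit vector `u`, Cramer's rule (`A adj A = det A`) gives
`det f = Σ_j ⟨f_j,u⟩ det(f with u in slot j)`, where the terms with `f_j = v_j ⊥ u` vanish, so both
sides agree. For `k = 0` every slot holds some `v_j` and this expansion is an empty sum.
-/

open Finset Matrix

theorem Matrix.vecMul_dotProduct_cramer {ι R : Type*} [Fintype ι] [DecidableEq ι] [CommRing R]
    (A : Matrix ι ι R) (u : ι → R) : (u ᵥ* A) ⬝ᵥ A.cramer u = A.det * (u ⬝ᵥ u) := by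
  rw [cramer_eq_adjugate_mulVec, ← dotProduct_mulVec, mulVec_mulVec, mul_adjugate, smul_mulVec,
    one_mulVec, dotProduct_smul, smul_eq_mul]

namespace LipschitzKilling

variable {n : ℕ}

local notation "V" n:max => EuclideanSpace ℝ (Fin (n + 1))

theorem detPairLK_eq_sum_inner_mul_update {u : V n} (hu : ‖u‖ = 1) (f : Fin (n + 1) → V n) :
    detPairLK n f = ∑ m, ⟪f m, u⟫ * detPairLK n (Function.update f m u) := by
  set b := (EuclideanSpace.basisFun (Fin (n + 1)) ℝ).toBasis
  have huu : b.repr u ⬝ᵥ b.repr u = 1 := by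
    have hrepr : ⇑(b.repr u) = u.ofLp := by ext; simp [b]
    have := real_inner_self_eq_norm_sq u
    rwa [hu, one_pow, EuclideanSpace.inner_eq_star_dotProduct, star_trivial, ← hrepr] at this
  have key := vecMul_dotProduct_cramer (b.toMatrix f) (b.repr u)
  rw [huu, mul_one, ← Module.Basis.det_apply] at key
  rw [detPairLK, ← key, dotProduct]
  refine sum_congr rfl fun m _ => ?_
  rw [cramer_apply, ← Module.Basis.toMatrix_update, ← Module.Basis.det_apply]
  simp [b, detPairLK, vecMul, dotProduct, Module.Basis.toMatrix_apply, PiLp.inner_apply]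

theorem neg_one_pow_mul_detPairLK_snoc (j : Fin (n + 1)) (g : Fin n → V n) (w : V n) :
    (-1) ^ (j : ℕ) * detPairLK n (Fin.snoc g w) = (-1) ^ n * detPairLK n (j.insertNth w g) := by
  simp only [detPairLK, ← Fin.insertNth_last', AlternatingMap.map_insertNth, Fin.val_last]
  ring

def proj {E : Type*} (b : Fin 2) (z : E × E) : E := if b = 0 then z.1 else z.2

def select {m : ℕ} {E : Type*} (ξ : Fin m → E × E) (τ : Fin m → Fin 2) : Fin m → E :=
  fun l => proj (τ l) (ξ l)

theorem select_insertNth {m : ℕ} {E : Type*} (ξ : Fin (m + 1) → E × E) (j : Fin (m + 1))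
    (b : Fin 2) (σ : Fin m → Fin 2) :
    select ξ (j.insertNth b σ)
      = j.insertNth (proj b (ξ j)) (select (fun i => ξ (j.succAbove i)) σ) := by
  ext l
  cases l using j.succAboveCases <;> simp [select]

def weightSet (m d : ℕ) : Finset (Fin m → Fin 2) := univ.filter fun σ => ∑ i, (σ i : ℕ) = d

theorem LKform_eq_sum (k : ℕ) (p : V n × V n) (ξ : Fin n → V n × V n) :
    LKform n k p ξ = ∑ σ ∈ weightSet n (n - k), detPairLK n (Fin.snoc (select ξ σ) p.2) :=
  rfl

theorem fderiv_LKform (k : ℕ) (ξ : Fin n → V n × V n) (p w : V n × V n) :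
    fderiv ℝ (fun q => LKform n k q ξ) p w = LKform n k w ξ := by
  let L : (V n × V n) →ₗ[ℝ] ℝ := ∑ σ ∈ weightSet n (n - k),
    ((EuclideanSpace.basisFun (Fin (n + 1)) ℝ).toBasis.det.toMultilinearMap.toLinearMap
      (Fin.snoc (select ξ σ) 0) (Fin.last n)).comp (LinearMap.snd ℝ _ _)
  have hL : (fun q => LKform n k q ξ) = LinearMap.toContinuousLinearMap L := by
    ext q
    simp [L, LKform_eq_sum, MultilinearMap.toLinearMap_apply, detPairLK, Fin.update_snoc_last]
  rw [hL, ContinuousLinearMap.fderiv]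
  exact (congrFun hL w).symm

theorem sum_sum_insertNth {M : Type*} [AddCommMonoid M] (b : Fin 2) (d : ℕ)
    (W : (Fin (n + 1) → Fin 2) → Fin (n + 1) → M) :
    ∑ j, ∑ σ ∈ weightSet n d, W (j.insertNth b σ) j
      = ∑ τ ∈ weightSet (n + 1) (d + b), ∑ j ∈ univ.filter (τ · = b), W τ j := by
  rw [sum_comm' (t' := univ) (s' := fun j => (weightSet (n + 1) (d + b)).filter (· j = b))
    (by simp)]
  refine sum_congr rfl fun j _ => ?_
  refine sum_nbij' (fun σ => j.insertNth b σ) (fun τ i => τ (j.succAbove i)) ?_ ?_ ?_ ?_ ?_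
  · intro σ hσ
    simp_all [weightSet, Fin.sum_univ_succAbove _ j, add_comm]
  · intro τ hτ
    simp only [weightSet, mem_filter, mem_univ, true_and] at hτ ⊢
    rw [Fin.sum_univ_succAbove _ j, hτ.2] at hτ
    omega
  · simp
  · intro τ hτ
    rw [mem_filter] at hτ
    rw [← hτ.2]
    exact Fin.insertNth_self_removeNth j τ
  · simp

theorem card_filter_eq_one {m d : ℕ} {τ : Fin m → Fin 2} (hτ : τ ∈ weightSet m d) :
    #(univ.filter (τ · = 1)) = d := by
  rw [weightSet, mem_filter] at hτ
  rw [← hτ.2, card_filter]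
  have h01 : ∀ a : Fin 2, (if a = 1 then 1 else 0) = (a : ℕ) := by decide
  exact sum_congr rfl fun l _ => h01 (τ l)

theorem LKd_eq (k : ℕ) (p : V n × V n) (ξ : Fin (n + 1) → V n × V n) :
    LKd n k p ξ = (-1) ^ n * ((n - k + 1 : ℕ) *
      ∑ τ ∈ weightSet (n + 1) (n - k + 1), detPairLK n (select ξ τ)) := by
  have hterm : ∀ j : Fin (n + 1),
      (-1) ^ (j : ℕ) * fderiv ℝ (fun q => LKform n k q (fun i => ξ (j.succAbove i))) p (ξ j)
        = ∑ σ ∈ weightSet n (n - k), (-1) ^ n * detPairLK n (select ξ (j.insertNth 1 σ)) := by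
    intro j
    rw [fderiv_LKform, LKform_eq_sum, mul_sum]
    refine sum_congr rfl fun σ _ => ?_
    rw [neg_one_pow_mul_detPairLK_snoc j, select_insertNth]
    rfl
  rw [LKd, sum_congr rfl fun j _ => hterm j, sum_sum_insertNth 1 (n - k)
    (fun τ _ => (-1) ^ n * detPairLK n (select ξ τ)), Fin.val_one, mul_sum, mul_sum]
  refine sum_congr rfl fun τ hτ => ?_
  rw [sum_const, card_filter_eq_one hτ, nsmul_eq_mul]
  ring

theorem detPairLK_select_eq_sum {u : V n} (hu : ‖u‖ = 1) {ξ : Fin (n + 1) → V n × V n}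
    (hξ : ∀ l, ⟪(ξ l).2, u⟫ = 0) (τ : Fin (n + 1) → Fin 2) :
    detPairLK n (select ξ τ)
      = ∑ j ∈ univ.filter (τ · = 0),
          ⟪(ξ j).1, u⟫ * detPairLK n (Function.update (select ξ τ) j u) := by
  rw [detPairLK_eq_sum_inner_mul_update hu, sum_filter]
  refine sum_congr rfl fun j _ => ?_
  by_cases h : τ j = 0 <;> simp [select, proj, h, hξ]

theorem sum_neg_one_pow_mul_inner_mul_LKform (k : ℕ) {p : V n × V n} (hp : ‖p.2‖ = 1)
    {ξ : Fin (n + 1) → V n × V n} (hξ : ∀ j, ⟪(ξ j).2, p.2⟫ = 0) :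
    ∑ j : Fin (n + 1), (-1) ^ (j : ℕ) * ⟪(ξ j).1, p.2⟫ * LKform n k p (fun i => ξ (j.succAbove i))
      = (-1) ^ n * ∑ τ ∈ weightSet (n + 1) (n - k), detPairLK n (select ξ τ) := by
  have hterm : ∀ j : Fin (n + 1),
      (-1) ^ (j : ℕ) * ⟪(ξ j).1, p.2⟫ * LKform n k p (fun i => ξ (j.succAbove i))
        = ∑ σ ∈ weightSet n (n - k), (-1) ^ n * (⟪(ξ j).1, p.2⟫ *
            detPairLK n (Function.update (select ξ (j.insertNth 0 σ)) j p.2)) := by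
    intro j
    rw [LKform_eq_sum, mul_sum]
    refine sum_congr rfl fun σ _ => ?_
    rw [select_insertNth, Fin.update_insertNth, mul_left_comm ((-1) ^ n),
      ← neg_one_pow_mul_detPairLK_snoc j]
    ring
  rw [sum_congr rfl fun j _ => hterm j, sum_sum_insertNth 0 (n - k) (fun τ j => (-1) ^ n *
    (⟪(ξ j).1, p.2⟫ * detPairLK n (Function.update (select ξ τ) j p.2))), Fin.val_zero, add_zero,
    mul_sum]
  refine sum_congr rfl fun τ _ => ?_
  rw [← mul_sum, detPairLK_select_eq_sum hp hξ]

theorem detPairLK_select_eq_zero {u : V n} (hu : ‖u‖ = 1) {ξ : Fin (n + 1) → V n × V n}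
    (hξ : ∀ l, ⟪(ξ l).2, u⟫ = 0) {τ : Fin (n + 1) → Fin 2} (hτ : τ ∈ weightSet (n + 1) (n + 1)) :
    detPairLK n (select ξ τ) = 0 := by
  have hone : ∀ l ∈ univ, τ l = 1 := by
    rw [← card_filter_eq_iff, card_filter_eq_one hτ, card_univ, Fintype.card_fin]
  rw [detPairLK_select_eq_sum hu hξ, filter_false_of_mem fun l hl => by simp [hone l hl], sum_empty]

end LipschitzKilling

/-- for `(x,u) ∈ ℝ^{n+1} × 𝕊ⁿ` and tangent vectors
`ξ₁,…,ξ_{n+1}` to `ℝ^{n+1} × 𝕊ⁿ`, one has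
`dφ_k = (n−k+1) α ∧ φ_{k−1}` (`k = 1,…,n`) and `dφ₀ = 0`, where `α` is the
contact `1`-form `⟨(y,v), α(x,u)⟩ = y • u`. -/
theorem stmt_11 (n : ℕ)
    (p : EuclideanSpace ℝ (Fin (n + 1)) × EuclideanSpace ℝ (Fin (n + 1)))
    (hp : ‖p.2‖ = 1)
    (ξ : Fin (n + 1) → EuclideanSpace ℝ (Fin (n + 1)) × EuclideanSpace ℝ (Fin (n + 1)))
    (hξ : ∀ j, ⟪(ξ j).2, p.2⟫ = 0) :
    (∀ k : ℕ, 1 ≤ k → k ≤ n →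
      LKd n k p ξ = ((n - k + 1 : ℕ) : ℝ) *
        ∑ j : Fin (n + 1), (-1 : ℝ) ^ (j : ℕ) * ⟪(ξ j).1, p.2⟫ *
          LKform n (k - 1) p (fun i => ξ (j.succAbove i))) ∧
    LKd n 0 p ξ = 0 := by
  refine ⟨fun k hk1 hk2 => ?_, ?_⟩
  · rw [LipschitzKilling.LKd_eq,
      LipschitzKilling.sum_neg_one_pow_mul_inner_mul_LKform _ hp hξ,
      show n - (k - 1) = n - k + 1 by omega]
    ring
  · rw [LipschitzKilling.LKd_eq, Nat.sub_zero,
      sum_eq_zero fun τ hτ => LipschitzKilling.detPairLK_select_eq_zero hp hξ hτ, mul_zero, mul_zero]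
end
end

section
/- Let C ⊆ ℝ^{n+1} be nonempty and let nor(C) = {(x,u) ∈ cl(C) × 𝕊ⁿ : dist(x + s u, C) = s for some s > 0} be its proximal unit normal bundle. If W ⊆ ℝ^{n+1} × ℝ^{n+1} is open and W ∩ nor(C) ≠ ∅, then ℋⁿ(W ∩ nor(C)) > 0. -/
/-!
Take `(x, u) ∈ W ∩ nor C` with `infDist (x + s • u) C = s` and put `z₀ = x + (s/2) • u`. As `z₀`
lies strictly inside the segment from `x` to `x + s • u`, the point `x` is its unique nearest point
in `closure C`, so nearest points `z` of points `w` near `z₀` stay near `x`. Hence every `w` near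
`z₀` on the level set `{infDist · C = s/2}` is `z + (s/2) • v` for the pair
`(z, v) = (z, (s/2)⁻¹ • (w - z))` of `W ∩ nor C`. By the intermediate value theorem along lines
parallel to `u`, the orthogonal projection of that piece of level set onto `u^⊥ ≅ ℝⁿ` contains a
ball. So the Lipschitz map `(z, v) ↦ proj (z + (s/2) • v)` sends `W ∩ nor C` onto a set of
positive Lebesgue measure, which forces `ℋⁿ (W ∩ nor C) > 0`.
-/

open MeasureTheory Metric
open scoped ENNReal RealInnerProductSpace

def norBundle (n : ℕ) (C : Set (EuclideanSpace ℝ (Fin (n + 1)))) :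
    Set (EuclideanSpace ℝ (Fin (n + 1)) × EuclideanSpace ℝ (Fin (n + 1))) :=
  {p | p.1 ∈ closure C ∧ ‖p.2‖ = 1 ∧ ∃ s : ℝ, 0 < s ∧ infDist (p.1 + s • p.2) C = s}

section RayInNormedSpace

variable {E : Type*} [NormedAddCommGroup E] [NormedSpace ℝ E] {C : Set E} {x u : E} {s : ℝ}

lemma dist_add_smul_add_smul (hu : ‖u‖ = 1) (a b : ℝ) :
    dist (x + a • u) (x + b • u) = |a - b| := by
  rw [dist_add_left, dist_eq_norm, ← sub_smul, norm_smul, hu, mul_one, Real.norm_eq_abs]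

lemma infDist_add_smul_eq (hx : x ∈ closure C) (hu : ‖u‖ = 1)
    (hs : infDist (x + s • u) C = s) {r : ℝ} (hr : 0 ≤ r) (hrs : r ≤ s) :
    infDist (x + r • u) C = r := by
  have hx' : infDist (x + (0 : ℝ) • u) C = 0 := by simpa using infDist_zero_of_mem_closure hx
  have h0 := infDist_le_infDist_add_dist (x := x + r • u) (y := x + (0 : ℝ) • u) (s := C)
  have h1 := infDist_le_infDist_add_dist (x := x + s • u) (y := x + r • u) (s := C)
  rw [dist_add_smul_add_smul hu, hx', abs_of_nonneg (by linarith)] at h0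
  rw [dist_add_smul_add_smul hu, hs, abs_of_nonneg (by linarith)] at h1
  linarith

lemma eq_of_dist_add_smul_eq [StrictConvexSpace ℝ E] (hu : ‖u‖ = 1)
    (hs : infDist (x + s • u) C = s) {r : ℝ} (hr : 0 < r) (hrs : r < s) {z : E}
    (hz : z ∈ closure C) (hdz : dist (x + r • u) z = r) : z = x := by
  have hs0 : s ≠ 0 := (hr.trans hrs).ne'
  have hsz : s ≤ dist (x + s • u) z :=
    calc s = infDist (x + s • u) (closure C) := by rw [infDist_closure, hs]
      _ ≤ dist (x + s • u) z := infDist_le_dist_of_mem hz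
  have hsr : dist (x + s • u) (x + r • u) = s - r := by
    rw [dist_add_smul_add_smul hu, abs_of_pos (by linarith)]
  have hsz' : dist (x + s • u) z = s := by
    linarith [dist_triangle (x + s • u) (x + r • u) z]
  -- equality in the triangle inequality puts `x + r • u` on the segment from `x + s • u` to `z`
  have hline := eq_lineMap_of_dist_eq_mul_of_dist_eq_mul (r := (s - r) / s)
    (x := x + s • u) (y := x + r • u) (z := z)
    (by rw [hsr, hsz']; field_simp) (by rw [hdz, hsz']; field_simp; ring)
  rw [AffineMap.lineMap_apply, vsub_eq_sub, vadd_eq_add] at hline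
  have ht : (s - r) / s * s = s - r := by field_simp
  have : (s - r) • (z - x) = 0 := by
    linear_combination (norm := module) -(s • hline) - ht • (z - (x + s • u))
  have hsr0 : s - r ≠ 0 := by linarith
  rwa [smul_eq_zero_iff_right hsr0, sub_eq_zero] at this

lemma exists_abs_le_infDist_add_smul_add_eq (hx : x ∈ closure C) (hu : ‖u‖ = 1)
    (hs : infDist (x + s • u) C = s) {r t : ℝ} (htr : t ≤ r) (hrt : r + t ≤ s) {v : E}
    (hv : ‖v‖ ≤ t) : ∃ τ, |τ| ≤ t ∧ infDist (x + (r + τ) • u + v) C = r := by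
  have ht : 0 ≤ t := (norm_nonneg v).trans hv
  set f : ℝ → ℝ := fun τ => infDist (x + (r + τ) • u + v) C
  have hf : Continuous f := (continuous_infDist_pt C).comp (by fun_prop)
  have hdist : ∀ τ, dist (x + (r + τ) • u + v) (x + (r + τ) • u) = ‖v‖ := by simp
  have hlow : f (-t) ≤ r := by
    have := infDist_le_infDist_add_dist (s := C) (x := x + (r + -t) • u + v)
      (y := x + (r + -t) • u)
    rw [hdist, infDist_add_smul_eq hx hu hs (by linarith) (by linarith)] at this
    linarith
  have hhigh : r ≤ f t := by
    have := infDist_le_infDist_add_dist (s := C) (x := x + (r + t) • u)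
      (y := x + (r + t) • u + v)
    rw [dist_comm, hdist, infDist_add_smul_eq hx hu hs (by linarith) hrt] at this
    linarith
  obtain ⟨τ, hτ, hfτ⟩ := intermediate_value_Icc (by linarith) hf.continuousOn
    ⟨hlow, hhigh⟩
  exact ⟨τ, abs_le.2 hτ, hfτ⟩

end RayInNormedSpace

section ProperMetric

variable {X : Type*} [MetricSpace X] [ProperSpace X] {K : Set X}

lemma exists_forall_dist_lt_of_unique_nearest {z₀ x : X}
    (hunique : ∀ z ∈ closure K, dist z₀ z = infDist z₀ K → z = x) {ε : ℝ} (hε : 0 < ε) :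
    ∃ δ > 0, ∀ w, dist w z₀ < δ → ∀ z ∈ closure K, dist w z = infDist w K → dist z x < ε := by
  set B : Set X := (closure K ∩ closedBall z₀ (infDist z₀ K + 1)) \ ball x ε
  have hB : IsCompact B :=
    ((isCompact_closedBall _ _).inter_left isClosed_closure).diff isOpen_ball
  have hpos : ∀ z ∈ B, 0 < dist z₀ z - infDist z₀ K := by
    rintro z ⟨⟨hzK, -⟩, hzx⟩
    have hle : infDist z₀ K ≤ dist z₀ z := by
      rw [← infDist_closure]; exact infDist_le_dist_of_mem hzK
    refine sub_pos.2 (hle.lt_of_ne fun h => hzx ?_)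
    rw [hunique z hzK h.symm]
    exact mem_ball_self hε
  obtain ⟨η, hη, hηB⟩ := hB.exists_forall_le' (by fun_prop) hpos
  refine ⟨min (η / 2) (1 / 2), by positivity, fun w hw z hzK hwz => ?_⟩
  have hwη := hw.trans_le (min_le_left _ _)
  have hw1 := hw.trans_le (min_le_right _ _)
  have hz : dist z₀ z ≤ infDist z₀ K + 2 * dist w z₀ := by
    linarith [dist_triangle z₀ w z, dist_comm z₀ w,
      infDist_le_infDist_add_dist (x := w) (y := z₀) (s := K)]
  by_contra hzx
  have hzB : z ∈ B := ⟨⟨hzK, mem_closedBall'.2 (by linarith)⟩, by simpa [dist_comm] using hzx⟩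
  linarith [hηB z hzB]

end ProperMetric

lemma hausdorffMeasure_pos_of_closedBall_subset_image {X ι : Type*} [EMetricSpace X]
    [MeasurableSpace X] [BorelSpace X] [Fintype ι] {f : X → (ι → ℝ)} {K : NNReal}
    (hf : LipschitzWith K f) {S : Set X} {c : ι → ℝ} {ρ : ℝ} (hρ : 0 < ρ)
    (hS : closedBall c ρ ⊆ f '' S) : 0 < μH[Fintype.card ι] S := by
  have himage : 0 < μH[Fintype.card ι] (f '' S) := by
    rw [hausdorffMeasure_pi_real]
    exact (measure_closedBall_pos volume c hρ).trans_le (measure_mono hS)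
  have hle := hf.hausdorffMeasure_image_le (d := Fintype.card ι) (by positivity) S
  exact (ENNReal.mul_pos_iff.1 (himage.trans_le hle)).2

section InnerProductSpace

variable {E : Type*} [NormedAddCommGroup E] [InnerProductSpace ℝ E]

lemma exists_orthonormal_forall_inner_eq_zero {n : ℕ} (hE : Module.finrank ℝ E = n + 1) {u : E}
    (hu : u ≠ 0) : ∃ e : Fin n → E, Orthonormal ℝ e ∧ ∀ i, ⟪e i, u⟫ = 0 := by
  have : Fact (Module.finrank ℝ E = n + 1) := ⟨hE⟩
  let b := OrthonormalBasis.fromOrthogonalSpanSingleton (𝕜 := ℝ) n hu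
  exact ⟨fun i => b i, b.orthonormal.comp_linearIsometry (Submodule.subtypeₗᵢ _),
    fun i => Submodule.inner_left_of_mem_orthogonal (Submodule.mem_span_singleton_self u) (b i).2⟩

variable {ι : Type*}

noncomputable def innerCoords (e : ι → E) : E →L[ℝ] (ι → ℝ) :=
  ContinuousLinearMap.pi fun i => innerSL ℝ (e i)

@[simp]
lemma innerCoords_apply (e : ι → E) (y : E) (i : ι) : innerCoords e y i = ⟪e i, y⟫ := rfl

lemma closedBall_subset_innerCoords_image [Fintype ι] {e : ι → E} (he : Orthonormal ℝ e)
    {C : Set E} {x u : E} {s : ℝ} (heu : ∀ i, ⟪e i, u⟫ = 0) (hx : x ∈ closure C) (hu : ‖u‖ = 1)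
    (hs : infDist (x + s • u) C = s) {r t : ℝ} (ht : 0 < t) (htr : t ≤ r) (hrt : r + t ≤ s) :
    closedBall (innerCoords e (x + r • u)) (t / (Fintype.card ι + 1)) ⊆
      innerCoords e '' {w | dist w (x + r • u) ≤ 2 * t ∧ infDist w C = r} := by
  intro q hq
  set q₀ := innerCoords e (x + r • u)
  set v : E := ∑ i, (q i - q₀ i) • e i
  have hv : ‖v‖ ≤ t := by
    calc ‖v‖ ≤ ∑ i, ‖(q i - q₀ i) • e i‖ := norm_sum_le _ _
      _ = ∑ i, dist (q i) (q₀ i) := by simp [norm_smul, he.1, Real.dist_eq]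
      _ ≤ ∑ _i : ι, t / (Fintype.card ι + 1) :=
          Finset.sum_le_sum fun i _ => (dist_le_pi_dist q q₀ i).trans (mem_closedBall.1 hq)
      _ ≤ t := by
          rw [Finset.sum_const, Finset.card_univ, nsmul_eq_mul, ← mul_div_assoc,
            div_le_iff₀ (by positivity)]
          nlinarith
  obtain ⟨τ, hτ, hτC⟩ := exists_abs_le_infDist_add_smul_add_eq hx hu hs htr hrt hv
  refine ⟨x + (r + τ) • u + v, ⟨?_, hτC⟩, ?_⟩
  · have : x + (r + τ) • u + v - (x + r • u) = τ • u + v := by module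
    rw [dist_eq_norm, this]
    calc ‖τ • u + v‖ ≤ ‖τ • u‖ + ‖v‖ := norm_add_le _ _
      _ ≤ 2 * t := by rw [norm_smul, hu, mul_one, Real.norm_eq_abs]; linarith
  · ext i
    simp [q₀, v, inner_add_right, inner_smul_right, heu, he.inner_right_fintype]

end InnerProductSpace

section NormalBundle

variable {n : ℕ} {C : Set (EuclideanSpace ℝ (Fin (n + 1)))}

lemma mk_mem_norBundle {w z : EuclideanSpace ℝ (Fin (n + 1))} {r : ℝ} (hz : z ∈ closure C)
    (hr : 0 < r) (hwz : dist w z = r) (hw : infDist w C = r) :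
    (z, r⁻¹ • (w - z)) ∈ norBundle n C := by
  refine ⟨hz, ?_, r, hr, ?_⟩
  · rw [norm_smul, ← dist_eq_norm, hwz, norm_inv, Real.norm_of_nonneg hr.le,
      inv_mul_cancel₀ hr.ne']
  · rw [smul_inv_smul₀ hr.ne', add_sub_cancel, hw]

lemma exists_forall_mem_image_inter_norBundle {W : Set (EuclideanSpace ℝ (Fin (n + 1)) ×
      EuclideanSpace ℝ (Fin (n + 1)))} (hW : IsOpen W) {x u : EuclideanSpace ℝ (Fin (n + 1))}
    {s : ℝ} (hxuW : (x, u) ∈ W) (hx : x ∈ closure C) (hu : ‖u‖ = 1) (hs0 : 0 < s)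
    (hs : infDist (x + s • u) C = s) :
    ∃ δ > 0, ∀ w, dist w (x + (s / 2) • u) < δ → infDist w C = s / 2 →
      w ∈ (fun p => p.1 + (s / 2) • p.2) '' (W ∩ norBundle n C) := by
  set c := s / 2
  have hc : 0 < c := half_pos hs0
  have hcs : c < s := half_lt_self hs0
  -- on the level set `infDist w C = c` the normal at a nearest point `z` is `c⁻¹ • (w - z)`,
  -- which is continuous in `(w, z)`
  set g : EuclideanSpace ℝ (Fin (n + 1)) × EuclideanSpace ℝ (Fin (n + 1)) → _ :=
    fun q => (q.2, c⁻¹ • (q.1 - q.2))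
  have hgW : (x + c • u, x) ∈ g ⁻¹' W := by
    show (x, c⁻¹ • (x + c • u - x)) ∈ W
    rwa [add_sub_cancel_left, inv_smul_smul₀ hc.ne']
  obtain ⟨ε, hε, hεW⟩ := Metric.isOpen_iff.1 (hW.preimage (by fun_prop)) _ hgW
  have hunique : ∀ z ∈ closure C, dist (x + c • u) z = infDist (x + c • u) C → z = x :=
    fun z hz hdz => eq_of_dist_add_smul_eq hu hs hc hcs hz
      (hdz.trans (infDist_add_smul_eq hx hu hs hc.le hcs.le))
  obtain ⟨δ, hδ, hnear⟩ := exists_forall_dist_lt_of_unique_nearest hunique hε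
  refine ⟨min ε δ, lt_min hε hδ, fun w hw hwC => ?_⟩
  obtain ⟨z, hz, hwz⟩ := isClosed_closure.exists_infDist_eq_dist ⟨x, hx⟩ w
  rw [infDist_closure] at hwz
  have hzx := hnear w (hw.trans_le (min_le_right _ _)) z hz hwz.symm
  refine ⟨g (w, z), ⟨hεW ?_, mk_mem_norBundle hz hc (hwz.symm.trans hwC) hwC⟩, ?_⟩
  · rw [mem_ball, Prod.dist_eq]
    exact max_lt (hw.trans_le (min_le_left _ _)) hzx
  · simp [g, smul_inv_smul₀ hc.ne']

end NormalBundle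

theorem stmt_13_general (n : ℕ) (C : Set (EuclideanSpace ℝ (Fin (n + 1))))
    (W : Set (EuclideanSpace ℝ (Fin (n + 1)) × EuclideanSpace ℝ (Fin (n + 1))))
    (hW : IsOpen W) (hne : (W ∩ norBundle n C).Nonempty) :
    0 < μH[(n : ℝ)] (W ∩ norBundle n C) := by
  obtain ⟨⟨x, u⟩, hxuW, hx, hu, s, hs0, hs⟩ := hne
  dsimp only at hx hu hs
  obtain ⟨δ, hδ, hlevel⟩ := exists_forall_mem_image_inter_norBundle hW hxuW hx hu hs0 hs
  obtain ⟨e, he, heu⟩ := exists_orthonormal_forall_inner_eq_zero finrank_euclideanSpace_fin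
    (ne_zero_of_norm_ne_zero (a := u) (by simp [hu]))
  set t := min (δ / 4) (s / 2)
  have ht : 0 < t := by positivity
  have hball := closedBall_subset_innerCoords_image he heu hx hu hs ht (min_le_right _ _)
    (by linarith [min_le_right (δ / 4) (s / 2)])
  let Ψ := (innerCoords e).comp (ContinuousLinearMap.fst ℝ _ _ +
    (s / 2) • ContinuousLinearMap.snd ℝ _ _)
  simpa using hausdorffMeasure_pos_of_closedBall_subset_image Ψ.lipschitz (by positivity) <|
    hball.trans <| by
      rw [show ⇑Ψ = innerCoords e ∘ fun p => p.1 + (s / 2) • p.2 from rfl, Set.image_comp]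
      exact Set.image_mono fun w hw =>
        hlevel w (by linarith [hw.1, min_le_left (δ / 4) (s / 2)]) hw.2

/-- the proximal unit normal bundle has locally positive
`ℋⁿ`-measure wherever it is nonempty. -/
theorem stmt_13 (n : ℕ) (C : Set (EuclideanSpace ℝ (Fin (n + 1)))) (hC : C.Nonempty)
    (W : Set (EuclideanSpace ℝ (Fin (n + 1)) × EuclideanSpace ℝ (Fin (n + 1))))
    (hW : IsOpen W) (hne : (W ∩ norBundle n C).Nonempty) :
    0 < μH[(n : ℝ)] (W ∩ norBundle n C) :=
  stmt_13_general n C W hW hne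
end

section
/- Let U ⊆ ℝⁿ be open and f ∈ C(U) with the property that the set {(x, ∇f(x)) : x ∈ Diff(f)} is dense in U × ℝⁿ, where Diff(f) is the set of points of pointwise differentiability of f. Let E_f = {(x,t) ∈ U × ℝ : t ≤ f(x)} and G = {(x,f(x)) : x ∈ U}. Then the proximal unit normal bundle nor(E_f) is dense in G × 𝕊ⁿ₊, where 𝕊ⁿ₊ = {(z,t) ∈ ℝⁿ × ℝ : |z|² + t² = 1, t > 0}. -/
/-!
At a point `x'` where `f` is differentiable with gradient `g`, the subgraph lies below the tangent
hyperplane up to `o(‖y - x'‖)`, so the upward unit normal `w = (-g, 1) / √(1 + ‖g‖²)` satisfies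
`⟪p - a, w⟫ ≤ η ‖p - a‖` for `p ∈ E_f` near `a = (x', f x')`, for every `η > 0`. For such a `w`,
a nearest point `p` of `E_f` to `a + r w` lies within `2r` of `a`, and the cone condition then
forces the proximal normal of `E_f` at `p` in the direction of `a + r w - p` to make an angle
`O(√η)` with `w`; hence `(a, w)` is a limit of proximal normals. Since `(x', g) ↦ ((x', f x'), w)`
is continuous and every `ν` with positive last coordinate is such a `w`, density of the pairs
`(x', ∇f(x'))` transfers to `G × 𝕊ⁿ₊`.
-/

open Metric

noncomputable section

/-- The proximal unit normal bundle of a subset of the Euclidean space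
`ℝⁿ × ℝ ≅ ℝ^{n+1}` (with the `ℓ²` norm). -/
def norBundleP (n : ℕ) (C : Set (WithLp 2 (EuclideanSpace ℝ (Fin n) × ℝ))) :
    Set (WithLp 2 (EuclideanSpace ℝ (Fin n) × ℝ) × WithLp 2 (EuclideanSpace ℝ (Fin n) × ℝ)) :=
  {q | q.1 ∈ closure C ∧ ‖q.2‖ = 1 ∧ ∃ s : ℝ, 0 < s ∧ infDist (q.1 + s • q.2) C = s}

/-- The subgraph of `f : U → ℝ` as a subset of `ℝⁿ × ℝ ≅ ℝ^{n+1}`. -/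
def subgraph (n : ℕ) (U : Set (EuclideanSpace ℝ (Fin n)))
    (f : EuclideanSpace ℝ (Fin n) → ℝ) : Set (WithLp 2 (EuclideanSpace ℝ (Fin n) × ℝ)) :=
  {p | ((WithLp.equiv 2 (EuclideanSpace ℝ (Fin n) × ℝ)) p).1 ∈ U ∧
    ((WithLp.equiv 2 (EuclideanSpace ℝ (Fin n) × ℝ)) p).2 ≤
      f (((WithLp.equiv 2 (EuclideanSpace ℝ (Fin n) × ℝ)) p).1)}

open Filter Topology

section proximal

variable {E : Type*} [NormedAddCommGroup E] [InnerProductSpace ℝ E]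

-- `norBundleP n C` is `proximalNormals C` on `ℝⁿ ×₂ ℝ`, definitionally.
def proximalNormals (C : Set E) : Set (E × E) :=
  {q | q.1 ∈ closure C ∧ ‖q.2‖ = 1 ∧ ∃ s : ℝ, 0 < s ∧ infDist (q.1 + s • q.2) C = s}

lemma mem_proximalNormals_of_infDist_eq_dist {C : Set E} {c p : E} (hp : p ∈ closure C)
    (hpos : 0 < infDist c C) (hd : infDist c C = dist c p) :
    (p, (infDist c C)⁻¹ • (c - p)) ∈ proximalNormals C := by
  have hc : p + infDist c C • (infDist c C)⁻¹ • (c - p) = c := by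
    rw [smul_smul, mul_inv_cancel₀ hpos.ne', one_smul, add_sub_cancel]
  refine ⟨hp, ?_, infDist c C, hpos, by rw [hc]⟩
  rw [norm_smul, ← dist_eq_norm, ← hd, Real.norm_eq_abs, abs_of_pos (inv_pos.2 hpos),
    inv_mul_cancel₀ hpos.ne']

lemma eventually_inner_sub_le_nhdsWithin_closure {C : Set E} {a w : E} {η : ℝ}
    (h : ∀ᶠ p in 𝓝[C] a, inner ℝ (p - a) w ≤ η * ‖p - a‖) :
    ∀ᶠ p in 𝓝[closure C] a, inner ℝ (p - a) w ≤ η * ‖p - a‖ := by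
  obtain ⟨δ, hδ, hball⟩ := Metric.mem_nhdsWithin_iff.1 h
  have hclosed : IsClosed {p : E | inner ℝ (p - a) w ≤ η * ‖p - a‖} :=
    isClosed_le (by fun_prop) (by fun_prop)
  refine Metric.mem_nhdsWithin_iff.2 ⟨δ, hδ, fun p hp => ?_⟩
  exact closure_minimal hball hclosed (isOpen_ball.inter_closure hp)

lemma dist_sq_eq_of_norm_eq_one {ν w : E} (hν : ‖ν‖ = 1) (hw : ‖w‖ = 1) :
    dist ν w ^ 2 = 2 - 2 * inner ℝ ν w := by
  rw [dist_eq_norm, norm_sub_sq_real, hν, hw]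
  ring

variable [ProperSpace E]

lemma exists_mem_proximalNormals_inner_ge {C : Set E} {a w : E} {r η : ℝ}
    (ha : a ∈ closure C) (hw : ‖w‖ = 1) (hr : 0 < r) (hη₀ : 0 ≤ η) (hη : η < 1 / 2)
    (hcone : ∀ p ∈ closure C, dist p a ≤ 2 * r → inner ℝ (p - a) w ≤ η * ‖p - a‖) :
    ∃ q ∈ proximalNormals C, dist q.1 a ≤ 2 * r ∧ 1 - 2 * η ≤ inner ℝ q.2 w := by
  set c := a + r • w
  have hca : dist c a = r := by simp [c, hw, norm_smul, abs_of_pos hr]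
  obtain ⟨p, hpC, hpd⟩ := exists_mem_closure_infDist_eq_dist (closure_nonempty_iff.1 ⟨a, ha⟩) c
  have hsr : infDist c C ≤ r := by
    rw [← infDist_closure, ← hca]; exact infDist_le_dist_of_mem ha
  have hpa : dist p a ≤ 2 * r := by linarith [dist_triangle_left p a c]
  have hcp : r * (1 - 2 * η) ≤ inner ℝ (c - p) w := by
    have hinner : inner ℝ (p - a) w ≤ η * (2 * r) :=
      (hcone p hpC hpa).trans (by rw [← dist_eq_norm]; gcongr)
    have : c - p = r • w - (p - a) := by simp only [c]; abel
    rw [this, inner_sub_left, real_inner_smul_left, real_inner_self_eq_norm_sq, hw]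
    linarith
  have hs : r * (1 - 2 * η) ≤ infDist c C := by
    rw [hpd, dist_eq_norm]
    exact hcp.trans (by simpa [hw] using real_inner_le_norm (c - p) w)
  have hspos : 0 < infDist c C := lt_of_lt_of_le (mul_pos hr (by linarith)) hs
  refine ⟨_, mem_proximalNormals_of_infDist_eq_dist hpC hspos hpd, hpa, ?_⟩
  rw [real_inner_smul_left, le_inv_mul_iff₀ hspos]
  calc infDist c C * (1 - 2 * η) ≤ r * (1 - 2 * η) := by gcongr; linarith
    _ ≤ _ := hcp

theorem mem_closure_proximalNormals {C : Set E} {a w : E} (ha : a ∈ closure C) (hw : ‖w‖ = 1)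
    (hcone : ∀ η > 0, ∀ᶠ p in 𝓝[C] a, inner ℝ (p - a) w ≤ η * ‖p - a‖) :
    (a, w) ∈ closure (proximalNormals C) := by
  refine Metric.mem_closure_iff.2 fun ε hε => ?_
  set η := min (1 / 4) (ε ^ 2 / 8)
  obtain ⟨δ, hδ, hball⟩ := Metric.mem_nhdsWithin_iff.1
    (eventually_inner_sub_le_nhdsWithin_closure (hcone η (by positivity)))
  set r := min (δ / 3) (ε / 3)
  obtain ⟨q, hq, hqa, hqw⟩ := exists_mem_proximalNormals_inner_ge ha hw (r := r)
    (by positivity) (by positivity) (by linarith [min_le_left (1 / 4) (ε ^ 2 / 8)])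
    fun p hp hpa => hball ⟨mem_ball.2 (by linarith [min_le_left (δ / 3) (ε / 3)]), hp⟩
  have hqw' : dist q.2 w < ε := by
    refine lt_of_pow_lt_pow_left₀ 2 hε.le ?_
    rw [dist_sq_eq_of_norm_eq_one hq.2.1 hw]
    linarith [min_le_right (1 / 4) (ε ^ 2 / 8), pow_pos hε 2]
  refine ⟨q, hq, ?_⟩
  rw [dist_comm, Prod.dist_eq, max_lt_iff]
  exact ⟨by linarith [min_le_right (δ / 3) (ε / 3)], hqw'⟩

end proximal

section graphNormal

lemma norm_toLp_sq {F : Type*} [NormedAddCommGroup F] (u : F) (b : ℝ) :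
    ‖WithLp.toLp 2 (u, b)‖ ^ 2 = ‖u‖ ^ 2 + b ^ 2 := by
  simp [WithLp.prod_norm_sq_eq_of_L2]

variable {F : Type*} [NormedAddCommGroup F] [InnerProductSpace ℝ F]

def graphNormal (g : F) : WithLp 2 (F × ℝ) :=
  (√(1 + ‖g‖ ^ 2))⁻¹ • WithLp.toLp 2 (-g, 1)

lemma norm_graphNormal (g : F) : ‖graphNormal g‖ = 1 := by
  have hG : 0 < √(1 + ‖g‖ ^ 2) := by positivity
  have h : ‖WithLp.toLp 2 (-g, (1 : ℝ))‖ = √(1 + ‖g‖ ^ 2) := by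
    rw [← Real.sqrt_sq (norm_nonneg _), norm_toLp_sq, norm_neg, one_pow, add_comm]
  rw [graphNormal, norm_smul, h, norm_inv, Real.norm_of_nonneg hG.le, inv_mul_cancel₀ hG.ne']

lemma continuous_graphNormal : Continuous (graphNormal : F → WithLp 2 (F × ℝ)) := by
  unfold graphNormal
  have : Continuous fun g : F => WithLp.toLp 2 (-g, (1 : ℝ)) :=
    (WithLp.prod_continuous_toLp 2 F ℝ).comp (by fun_prop)
  exact ((by fun_prop : Continuous fun g : F => √(1 + ‖g‖ ^ 2)).inv₀
    (fun g => by positivity)).smul this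

lemma inner_graphNormal (p : WithLp 2 (F × ℝ)) (g : F) :
    inner ℝ p (graphNormal g) = (√(1 + ‖g‖ ^ 2))⁻¹ * (p.snd - inner ℝ g p.fst) := by
  simp [graphNormal, real_inner_smul_left, real_inner_comm]
  ring

lemma graphNormal_neg_inv_smul {ν : WithLp 2 (F × ℝ)} (hν : ‖ν‖ = 1) (ht : 0 < ν.snd) :
    graphNormal (-(ν.snd)⁻¹ • ν.fst) = ν := by
  have hsq : ‖ν.fst‖ ^ 2 + ν.snd ^ 2 = 1 := by
    simpa [hν, Real.norm_eq_abs, sq_abs] using (WithLp.prod_norm_sq_eq_of_L2 ν).symm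
  have hG : √(1 + ‖-(ν.snd)⁻¹ • ν.fst‖ ^ 2) = (ν.snd)⁻¹ := by
    rw [Real.sqrt_eq_iff_mul_self_eq_of_pos (inv_pos.2 ht), norm_smul, norm_neg, norm_inv,
      Real.norm_of_nonneg ht.le]
    field_simp
    linarith
  rw [graphNormal, hG, inv_inv]
  refine WithLp.ofLp_injective 2 (Prod.ext ?_ ?_) <;> simp [ht.ne']

end graphNormal

section subgraph

variable {n : ℕ} {U : Set (EuclideanSpace ℝ (Fin n))} {f : EuclideanSpace ℝ (Fin n) → ℝ}
  {x g : EuclideanSpace ℝ (Fin n)}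

lemma eventually_inner_graphNormal_le (hg : HasGradientAt f g x) {η : ℝ} (hη : 0 < η) :
    ∀ᶠ p in 𝓝[subgraph n U f] WithLp.toLp 2 (x, f x),
      inner ℝ (p - WithLp.toLp 2 (x, f x)) (graphNormal g) ≤
        η * ‖p - WithLp.toLp 2 (x, f x)‖ := by
  have hfst : Tendsto WithLp.fst (𝓝[subgraph n U f] WithLp.toLp 2 (x, f x)) (𝓝 x) :=
    ((WithLp.continuous_fst 2 _ ℝ).tendsto _).mono_left nhdsWithin_le_nhds
  filter_upwards [hfst.eventually ((hasGradientAt_iff_isLittleO.1 hg).def hη),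
    self_mem_nhdsWithin] with p hp hpE
  set a := WithLp.toLp 2 (x, f x)
  have hlin : p.snd - f x - inner ℝ g (p.fst - x) ≤ η * ‖p.fst - x‖ :=
    (sub_le_sub_right (sub_le_sub_right hpE.2 _) _).trans ((le_abs_self _).trans hp)
  have hG : 1 ≤ √(1 + ‖g‖ ^ 2) := Real.one_le_sqrt.2 (by nlinarith [sq_nonneg ‖g‖])
  calc inner ℝ (p - a) (graphNormal g)
      = (√(1 + ‖g‖ ^ 2))⁻¹ * (p.snd - f x - inner ℝ g (p.fst - x)) := by
        rw [inner_graphNormal]; simp [a, sub_sub]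
    _ ≤ η * ‖p.fst - x‖ := by
        refine (mul_le_mul_of_nonneg_left hlin (by positivity)).trans ?_
        exact mul_le_of_le_one_left (by positivity) (inv_le_one_of_one_le₀ hG)
    _ ≤ η * ‖p - a‖ := by gcongr; exact WithLp.norm_fst_le (x := p - a)

theorem mem_closure_norBundleP_of_hasGradientAt (hx : x ∈ U) (hg : HasGradientAt f g x) :
    (WithLp.toLp 2 (x, f x), graphNormal g) ∈ closure (norBundleP n (subgraph n U f)) :=
  mem_closure_proximalNormals (subset_closure ⟨hx, le_rfl⟩) (norm_graphNormal g)
    fun _ hη => eventually_inner_graphNormal_le hg hη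

end subgraph

theorem stmt_14_general (n : ℕ) (U : Set (EuclideanSpace ℝ (Fin n)))
    (f : EuclideanSpace ℝ (Fin n) → ℝ) (hf : ContinuousOn f U)
    (hdense : ∀ x ∈ U, ∀ v : EuclideanSpace ℝ (Fin n),
      (x, v) ∈ closure {q : EuclideanSpace ℝ (Fin n) × EuclideanSpace ℝ (Fin n) |
        q.1 ∈ U ∧ DifferentiableAt ℝ f q.1 ∧ q.2 = gradient f q.1}) :
    ∀ x ∈ U, ∀ ν : WithLp 2 (EuclideanSpace ℝ (Fin n) × ℝ), ‖ν‖ = 1 →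
      0 < ((WithLp.equiv 2 (EuclideanSpace ℝ (Fin n) × ℝ)) ν).2 →
      (((WithLp.equiv 2 (EuclideanSpace ℝ (Fin n) × ℝ)).symm (x, f x), ν)) ∈
        closure (norBundleP n (subgraph n U f)) := by
  intro x hx ν hν ht
  set D := {q : EuclideanSpace ℝ (Fin n) × EuclideanSpace ℝ (Fin n) |
    q.1 ∈ U ∧ DifferentiableAt ℝ f q.1 ∧ q.2 = gradient f q.1}
  set Φ := fun q : EuclideanSpace ℝ (Fin n) × EuclideanSpace ℝ (Fin n) =>
    (WithLp.toLp 2 (q.1, f q.1), graphNormal q.2)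
  have hΦ : ContinuousWithinAt Φ D (x, -(ν.snd)⁻¹ • ν.fst) := by
    have hfD : ContinuousWithinAt (fun q => f q.1) D (x, -(ν.snd)⁻¹ • ν.fst) :=
      (hf x hx).comp continuousWithinAt_fst fun q hq => hq.1
    exact ((WithLp.prod_continuous_toLp 2 _ ℝ).continuousAt.comp_continuousWithinAt
      (continuousWithinAt_fst.prodMk hfD)).prodMk
      (continuous_graphNormal.continuousAt.comp_continuousWithinAt continuousWithinAt_snd)
  have hΦD : Φ '' D ⊆ closure (norBundleP n (subgraph n U f)) := by
    rintro _ ⟨⟨y, v⟩, ⟨hyU, hyf, hv⟩, rfl⟩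
    exact mem_closure_norBundleP_of_hasGradientAt hyU (hv ▸ hyf.hasGradientAt)
  have := closure_minimal hΦD isClosed_closure (hΦ.mem_closure_image (hdense x hx _))
  rwa [show Φ (x, -(ν.snd)⁻¹ • ν.fst) = _ from
    congrArg (Prod.mk _) (graphNormal_neg_inv_smul hν ht)] at this

/-- if the graph of the pointwise gradient of a continuous
function `f` is dense in `U × ℝⁿ`, then the proximal unit normal bundle of the
subgraph `E_f` is dense in `G × 𝕊ⁿ₊`, where `G` is the graph of `f` and `𝕊ⁿ₊`
the open upper unit hemisphere. -/
theorem stmt_14 (n : ℕ) (U : Set (EuclideanSpace ℝ (Fin n))) (hU : IsOpen U)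
    (f : EuclideanSpace ℝ (Fin n) → ℝ) (hf : ContinuousOn f U)
    (hdense : ∀ x ∈ U, ∀ v : EuclideanSpace ℝ (Fin n),
      (x, v) ∈ closure {q : EuclideanSpace ℝ (Fin n) × EuclideanSpace ℝ (Fin n) |
        q.1 ∈ U ∧ DifferentiableAt ℝ f q.1 ∧ q.2 = gradient f q.1}) :
    ∀ x ∈ U, ∀ ν : WithLp 2 (EuclideanSpace ℝ (Fin n) × ℝ), ‖ν‖ = 1 →
      0 < ((WithLp.equiv 2 (EuclideanSpace ℝ (Fin n) × ℝ)) ν).2 →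
      (((WithLp.equiv 2 (EuclideanSpace ℝ (Fin n) × ℝ)).symm (x, f x), ν)) ∈
        closure (norBundleP n (subgraph n U f)) :=
  stmt_14_general n U f hf hdense
end
end

section
/- There exists a convex function f ∈ C¹(ℝ) (for example the primitive of the Cantor ternary function) whose derivative f' is continuous, nondecreasing, nonconstant, and differentiable with f''(x) = 0 at Lebesgue-almost every x ∈ ℝ. Consequently the graph of f has approximate curvature zero ℋ¹-almost everywhere but is contained in no line. -/
/-!
The Cantor function `c` is the fixed point of `CantorFunction.step`, which is a `1/2`-contraction
for the sup distance on the complete space of continuous distribution functions of `[0, 1]`; so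
`c` is continuous and monotone, with `c 0 = 0` and `c 1 = 1`. By self-similarity, `c` is locally
constant off the `n`-th stage of the Cantor set for every `n`, hence off the Cantor set, which is
null because its `n`-th stage has measure at most `(2/3)^n`. The primitive `f x = ∫₀ˣ c` is then
`C¹` with `f' = c`: convex because `c` is monotone, not affine because `c` is not constant, and
`f'' = c' = 0` almost everywhere.
-/

open MeasureTheory Filter Set Topology BoundedContinuousFunction

noncomputable section

theorem one_mem_preCantorSet (n : ℕ) : (1 : ℝ) ∈ preCantorSet n := by
  induction n with
  | zero => simp
  | succ n ih => exact Or.inr ⟨1, ih, by norm_num⟩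

theorem mem_image_div_three_iff {s : Set ℝ} {x : ℝ} : x ∈ (· / 3) '' s ↔ 3 * x ∈ s := by
  constructor
  · rintro ⟨y, hy, rfl⟩; convert hy using 1; ring
  · exact fun hx => ⟨3 * x, hx, by ring⟩

theorem mem_image_two_add_div_three_iff {s : Set ℝ} {x : ℝ} :
    x ∈ (fun y => (2 + y) / 3) '' s ↔ 3 * x - 2 ∈ s := by
  constructor
  · rintro ⟨y, hy, rfl⟩; convert hy using 1; ring
  · exact fun hx => ⟨3 * x - 2, hx, by ring⟩

theorem volume_image_add_div_three (c : ℝ) (s : Set ℝ) :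
    volume ((fun x => (c + x) / 3) '' s) = volume s / 3 := by
  have : (fun x : ℝ => (c + x) / 3) = AffineMap.homothety (c / 2) (1 / 3 : ℝ) := by
    ext x; simp [AffineMap.homothety_apply]; ring
  rw [this, Measure.addHaar_image_homothety, Module.finrank_self, pow_one,
    abs_of_pos (by norm_num), ENNReal.ofReal_div_of_pos (by norm_num)]
  simp [ENNReal.div_eq_inv_mul]

theorem volume_preCantorSet_le (n : ℕ) : volume (preCantorSet n) ≤ (2 / 3 : ENNReal) ^ n := by
  induction n with
  | zero => simp
  | succ n ih =>
    have h := volume_image_add_div_three 0 (preCantorSet n)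
    simp only [zero_add] at h
    calc volume (preCantorSet (n + 1))
        ≤ volume (preCantorSet n) / 3 + volume (preCantorSet n) / 3 :=
          (measure_union_le _ _).trans_eq (by rw [h, volume_image_add_div_three])
      _ ≤ (2 / 3) ^ n / 3 + (2 / 3) ^ n / 3 := by gcongr
      _ = (2 / 3) ^ (n + 1) := by
          rw [← ENNReal.add_div, ← two_mul, pow_succ, mul_comm, mul_div_assoc]

theorem volume_cantorSet : volume cantorSet = 0 := by
  refine le_antisymm (ge_of_tendsto' (ENNReal.tendsto_pow_atTop_nhds_zero_of_lt_one ?_)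
    fun n => (measure_mono (iInter_subset _ n)).trans (volume_preCantorSet_le n)) bot_le
  exact ENNReal.div_lt_of_lt_mul' (by norm_num)

namespace CantorFunction

def step (h : ℝ → ℝ) (x : ℝ) : ℝ :=
  if x ≤ 1 / 3 then h (3 * x) / 2 else if x ≤ 2 / 3 then 1 / 2 else (1 + h (3 * x - 2)) / 2

def IsUnitCDF (h : ℝ → ℝ) : Prop :=
  Monotone h ∧ (∀ x ≤ 0, h x = 0) ∧ ∀ x, 1 ≤ x → h x = 1

theorem isClosed_setOf_isUnitCDF : IsClosed {h : ℝ → ℝ | IsUnitCDF h} := by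
  have hev (x a : ℝ) : IsClosed {h : ℝ → ℝ | h x = a} :=
    isClosed_eq (continuous_apply x) continuous_const
  have : {h : ℝ → ℝ | IsUnitCDF h} =
      {h | Monotone h} ∩ (⋂ x ∈ Iic 0, {h | h x = 0}) ∩ ⋂ x ∈ Ici 1, {h | h x = 1} := by
    ext h; simp [IsUnitCDF, and_assoc]
  rw [this]
  exact (isClosed_monotone.inter (isClosed_biInter fun x _ => hev x 0)).inter
    (isClosed_biInter fun x _ => hev x 1)

namespace IsUnitCDF

variable {h : ℝ → ℝ}

theorem mem_Icc (hh : IsUnitCDF h) (x : ℝ) : h x ∈ Icc 0 1 := by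
  obtain ⟨hmono, h0, h1⟩ := hh
  constructor
  · rcases le_total x 0 with hx | hx
    · rw [h0 x hx]
    · rw [← h0 0 le_rfl]; exact hmono hx
  · rcases le_total 1 x with hx | hx
    · rw [h1 x hx]
    · rw [← h1 1 le_rfl]; exact hmono hx

theorem step (hh : IsUnitCDF h) : IsUnitCDF (step h) := by
  obtain ⟨hmono, h0, h1⟩ := hh
  have hI := mem_Icc ⟨hmono, h0, h1⟩
  refine ⟨fun x y hxy => ?_, fun x hx => ?_, fun x hx => ?_⟩
  · have h3 : h (3 * x) ≤ h (3 * y) := hmono (by linarith)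
    have h3' : h (3 * x - 2) ≤ h (3 * y - 2) := hmono (by linarith)
    unfold CantorFunction.step
    split_ifs <;> linarith [(hI (3 * x)).2, (hI (3 * y - 2)).1]
  · rw [CantorFunction.step, if_pos (by linarith), h0 _ (by linarith), zero_div]
  · rw [CantorFunction.step, if_neg (by linarith), if_neg (by linarith), h1 _ (by linarith)]
    norm_num

end IsUnitCDF

theorem continuous_step {h : ℝ → ℝ} (hc : Continuous h) (h0 : h 0 = 0) (h1 : h 1 = 1) :
    Continuous (step h) := by
  refine Continuous.if_le (by fun_prop) (Continuous.if_le (by fun_prop) (by fun_prop)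
    (by fun_prop) (by fun_prop) fun x hx => ?_) (by fun_prop) (by fun_prop) fun x hx => ?_
  · norm_num [hx, h0]
  · norm_num [hx, h1]

theorem abs_step_sub_step_le {h h' : ℝ → ℝ} {C : ℝ} (hC : 0 ≤ C) (hb : ∀ y, |h y - h' y| ≤ C)
    (x : ℝ) : |step h x - step h' x| ≤ C / 2 := by
  unfold step
  split_ifs
  · rw [← _root_.sub_div, abs_div, abs_two]; gcongr; exact hb _
  · simp; positivity
  · rw [← _root_.sub_div, add_sub_add_left_eq_sub, abs_div, abs_two]; gcongr; exact hb _

def unitCDF : Set (ℝ →ᵇ ℝ) := {h | IsUnitCDF h}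

theorem isClosed_unitCDF : IsClosed unitCDF :=
  isClosed_setOf_isUnitCDF.preimage continuous_coe

instance : CompleteSpace unitCDF := isClosed_unitCDF.completeSpace_coe

def IsUnitCDF.toBCF {h : ℝ → ℝ} (hh : IsUnitCDF h) (hc : Continuous h) : ℝ →ᵇ ℝ :=
  .mkOfBound ⟨h, hc⟩ 1 fun x y => Real.dist_le_of_mem_Icc_01 (hh.mem_Icc x) (hh.mem_Icc y)

def stepUnitCDF (h : unitCDF) : unitCDF :=
  have hh : IsUnitCDF h := h.2
  ⟨hh.step.toBCF (continuous_step h.1.continuous (hh.2.1 0 le_rfl) (hh.2.2 1 le_rfl)), hh.step⟩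

theorem contractingWith_stepUnitCDF : ContractingWith (1 / 2) stepUnitCDF := by
  refine ⟨by norm_num, LipschitzWith.of_dist_le_mul fun h h' => ?_⟩
  rw [Subtype.dist_eq, Subtype.dist_eq, dist_le (by positivity)]
  intro x
  simpa [stepUnitCDF, IsUnitCDF.toBCF, Real.dist_eq, div_eq_inv_mul] using
    abs_step_sub_step_le dist_nonneg (fun y => (dist_coe_le_dist y : dist (h.1 y) (h'.1 y) ≤ _)) x

theorem isUnitCDF_projIcc : IsUnitCDF fun x => (projIcc (0 : ℝ) 1 zero_le_one x : ℝ) :=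
  ⟨fun _ _ hxy => monotone_projIcc zero_le_one hxy,
    fun _ hx => congrArg Subtype.val (projIcc_of_le_left zero_le_one hx),
    fun _ hx => congrArg Subtype.val (projIcc_of_right_le zero_le_one hx)⟩

instance : Nonempty unitCDF :=
  ⟨⟨isUnitCDF_projIcc.toBCF (continuous_subtype_val.comp continuous_projIcc), isUnitCDF_projIcc⟩⟩

end CantorFunction

open CantorFunction

def cantorFunction : ℝ → ℝ :=
  (ContractingWith.fixedPoint stepUnitCDF contractingWith_stepUnitCDF).1

theorem isUnitCDF_cantorFunction : IsUnitCDF cantorFunction :=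
  (ContractingWith.fixedPoint stepUnitCDF contractingWith_stepUnitCDF).2

theorem continuous_cantorFunction : Continuous cantorFunction :=
  (ContractingWith.fixedPoint stepUnitCDF contractingWith_stepUnitCDF).1.continuous

theorem step_cantorFunction : step cantorFunction = cantorFunction :=
  congrArg (fun h : unitCDF => ⇑(h : ℝ →ᵇ ℝ)) contractingWith_stepUnitCDF.fixedPoint_isFixedPt

theorem cantorFunction_of_le_one_third {x : ℝ} (hx : x ≤ 1 / 3) :
    cantorFunction x = cantorFunction (3 * x) / 2 := by
  rw [← congrFun step_cantorFunction x, step, if_pos hx]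

theorem cantorFunction_of_mem_Ioc {x : ℝ} (hx : x ∈ Ioc (1 / 3) (2 / 3)) :
    cantorFunction x = 1 / 2 := by
  rw [← congrFun step_cantorFunction x, step, if_neg hx.1.not_ge, if_pos hx.2]

theorem cantorFunction_of_two_thirds_lt {x : ℝ} (hx : 2 / 3 < x) :
    cantorFunction x = (1 + cantorFunction (3 * x - 2)) / 2 := by
  rw [← congrFun step_cantorFunction x, step, if_neg (by linarith), if_neg hx.not_ge]

theorem cantorFunction_eventually_eq_of_notMem_preCantorSet {n : ℕ} {x : ℝ}
    (hx : x ∉ preCantorSet n) : ∀ᶠ y in 𝓝 x, cantorFunction y = cantorFunction x := by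
  obtain ⟨-, h0, h1⟩ := isUnitCDF_cantorFunction
  induction n generalizing x with
  | zero =>
    simp only [preCantorSet_zero, mem_Icc, not_and_or, not_le] at hx
    rcases hx with hx | hx
    · filter_upwards [Iio_mem_nhds hx] with y hy
      rw [h0 y hy.le, h0 x hx.le]
    · filter_upwards [Ioi_mem_nhds hx] with y hy
      rw [h1 y hy.le, h1 x hx.le]
  | succ n ih =>
    simp only [preCantorSet_succ, mem_union, mem_image_div_three_iff,
      mem_image_two_add_div_three_iff, not_or] at hx
    obtain ⟨hl, hr⟩ := hx
    have hx₁ : x ≠ 1 / 3 := by rintro rfl; exact hl (by simpa using one_mem_preCantorSet n)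
    have hx₂ : x ≠ 2 / 3 := by rintro rfl; exact hr (by norm_num [zero_mem_preCantorSet])
    rcases hx₁.lt_or_gt with hx₁ | hx₁
    · have hc : Tendsto (fun y : ℝ => 3 * y) (𝓝 x) (𝓝 (3 * x)) :=
        (continuous_const_mul 3).tendsto x
      filter_upwards [Iio_mem_nhds hx₁, hc.eventually (ih hl)] with y hy hy'
      rw [cantorFunction_of_le_one_third hy.le, cantorFunction_of_le_one_third hx₁.le, hy']
    rcases hx₂.lt_or_gt with hx₂ | hx₂
    · filter_upwards [Ioo_mem_nhds hx₁ hx₂] with y hy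
      rw [cantorFunction_of_mem_Ioc (Ioo_subset_Ioc_self hy),
        cantorFunction_of_mem_Ioc ⟨hx₁, hx₂.le⟩]
    · have hc : Tendsto (fun y : ℝ => 3 * y - 2) (𝓝 x) (𝓝 (3 * x - 2)) :=
        ((continuous_const_mul 3).sub continuous_const).tendsto x
      filter_upwards [Ioi_mem_nhds hx₂, hc.eventually (ih hr)] with y hy hy'
      rw [cantorFunction_of_two_thirds_lt hy, cantorFunction_of_two_thirds_lt hx₂, hy']

theorem ae_hasDerivAt_cantorFunction : ∀ᵐ x, HasDerivAt cantorFunction 0 x := by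
  filter_upwards [measure_eq_zero_iff_ae_notMem.1 volume_cantorSet] with x hx
  obtain ⟨n, hn⟩ : ∃ n, x ∉ preCantorSet n := by simpa [cantorSet] using hx
  exact (hasDerivAt_const x _).congr_of_eventuallyEq
    (cantorFunction_eventually_eq_of_notMem_preCantorSet hn)

end

/-- there is a convex `C¹` function on `ℝ` (e.g. a primitive of the
Cantor ternary function) whose derivative is continuous, nondecreasing,
nonconstant, and whose second derivative exists and vanishes almost everywhere;
consequently its graph is contained in no line. -/
theorem stmt_18 :
    ∃ f : ℝ → ℝ,
      ConvexOn ℝ Set.univ f ∧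
      ContDiff ℝ 1 f ∧
      Continuous (deriv f) ∧
      Monotone (deriv f) ∧
      ¬ (∃ c : ℝ, ∀ x : ℝ, deriv f x = c) ∧
      (∀ᵐ x : ℝ ∂volume, HasDerivAt (deriv f) 0 x) ∧
      ¬ (∃ a b : ℝ, ∀ x : ℝ, f x = a * x + b) := by
  obtain ⟨hmono, h0, h1⟩ := isUnitCDF_cantorFunction
  set f : ℝ → ℝ := fun x => ∫ t in (0 : ℝ)..x, cantorFunction t
  have hf (x : ℝ) : HasDerivAt f (cantorFunction x) x :=
    (continuous_cantorFunction.integral_hasStrictDerivAt 0 x).hasDerivAt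
  have hdiff : Differentiable ℝ f := fun x => (hf x).differentiableAt
  have hderiv : deriv f = cantorFunction := funext fun x => (hf x).deriv
  have hnonconst : ¬ ∃ c : ℝ, ∀ x : ℝ, deriv f x = c := by
    rintro ⟨c, hc⟩
    have h01 := (hc 0).trans (hc 1).symm
    norm_num [hderiv, h0 0 le_rfl, h1 1 le_rfl] at h01
  refine ⟨f, Monotone.convexOn_univ_of_deriv hdiff (hderiv ▸ hmono),
    contDiff_one_iff_deriv.2 ⟨hdiff, hderiv ▸ continuous_cantorFunction⟩,
    hderiv ▸ continuous_cantorFunction, hderiv ▸ hmono, hnonconst,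
    hderiv ▸ ae_hasDerivAt_cantorFunction, ?_⟩
  rintro ⟨a, b, hab⟩
  refine hnonconst ⟨a, fun x => ?_⟩
  simp [show f = fun x => a * x + b from funext hab]
end
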